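/- arXiv:1503.01892 — 4 statements merged into one kernel-verified Lean document; each statement's English description precedes it below -/
import Mathlib

section
/- Let A = I + (1/(g₋ᵀg₋)) p₋ gᵀ with g₋ ≠ 0 and gᵀp₋ = 0, let W be nonsingular and B = Aᵀ W A. Then for the solution p of B p = −g and any nonzero scalar δ: p = δ (−A⁻¹g) if and only if W g = (1/δ) g. (In particular A^{-T} g = g.) -/
/-!
Since `gᵀp₋ = 0`, the rank-one matrix `N = p₋ gᵀ` squares to zero, so `A = I + cN` has inverse
`I − cN`, and `g` is a left fixed vector of both. Cancelling `Aᵀ` from `Aᵀ W A p = −g = Aᵀ(−g)`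
gives `W A p = −g`, and `p = −δ A⁻¹g` is then equivalent to `W⁻¹g = δ g`.
-/

open Matrix

namespace Matrix

variable {ι : Type*} [Fintype ι]

section CommRing

variable {R : Type*} [CommRing R] {u v : ι → R}

lemma vecMulVec_mul_self_of_dotProduct_eq_zero (h : v ⬝ᵥ u = 0) :
    vecMulVec u v * vecMulVec u v = 0 := by
  rw [vecMulVec_mul_vecMulVec, h, zero_smul, vecMulVec_zero]

variable [DecidableEq ι]

lemma one_add_smul_vecMulVec_mul_one_add_neg_smul (h : v ⬝ᵥ u = 0) (c : R) :
    (1 + c • vecMulVec u v) * (1 + (-c) • vecMulVec u v) = 1 := by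
  rw [neg_smul, ← sub_eq_add_neg, ← (Commute.one_left _).mul_self_sub_mul_self_eq,
    smul_mul_smul_comm, vecMulVec_mul_self_of_dotProduct_eq_zero h, smul_zero, mul_one, sub_zero]

lemma inv_one_add_smul_vecMulVec (h : v ⬝ᵥ u = 0) (c : R) :
    (1 + c • vecMulVec u v)⁻¹ = 1 + (-c) • vecMulVec u v :=
  inv_eq_right_inv (one_add_smul_vecMulVec_mul_one_add_neg_smul h c)

lemma isUnit_one_add_smul_vecMulVec (h : v ⬝ᵥ u = 0) (c : R) :
    IsUnit (1 + c • vecMulVec u v) :=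
  (isUnit_iff_isUnit_det _).mpr
    (isUnit_det_of_right_inverse (one_add_smul_vecMulVec_mul_one_add_neg_smul h c))

lemma vecMul_one_add_smul_vecMulVec (h : v ⬝ᵥ u = 0) (c : R) :
    v ᵥ* (1 + c • vecMulVec u v) = v := by
  rw [vecMul_add, vecMul_one, vecMul_smul, vecMul_vecMulVec, h, zero_smul, smul_zero, add_zero]

end CommRing

section Field

variable [DecidableEq ι] {K : Type*} [Field K] {A W : Matrix ι ι K} {g p : ι → K}

lemma mulVec_mulVec_eq_neg_of_transpose_mul_mul_mulVec_eq_neg (hA : IsUnit A)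
    (hgA : g ᵥ* A = g) (hp : (Aᵀ * W * A) *ᵥ p = -g) : W *ᵥ (A *ᵥ p) = -g := by
  apply mulVec_injective_iff_isUnit.mpr (A.isUnit_transpose.mpr hA)
  rw [mulVec_mulVec, mulVec_mulVec, hp, mulVec_neg, mulVec_transpose, hgA]

lemma eq_smul_neg_inv_mulVec_iff (hA : IsUnit A) (hW : IsUnit W)
    (hp : W *ᵥ (A *ᵥ p) = -g) {δ : K} (hδ : δ ≠ 0) :
    p = δ • -(A⁻¹ *ᵥ g) ↔ W *ᵥ g = δ⁻¹ • g := by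
  have hA_inv : A *ᵥ (δ • -(A⁻¹ *ᵥ g)) = -(δ • g) := by
    rw [mulVec_smul, mulVec_neg, mulVec_mulVec,
      mul_nonsing_inv _ ((isUnit_iff_isUnit_det A).mp hA), one_mulVec, smul_neg]
  rw [← (mulVec_injective_iff_isUnit.mpr hA).eq_iff, hA_inv,
    ← (mulVec_injective_iff_isUnit.mpr hW).eq_iff, hp, mulVec_neg, mulVec_smul, neg_inj,
    eq_inv_smul_iff₀ hδ, eq_comm]

end Field

end Matrix

theorem stmt3_general {n : ℕ} (pm gm g : Fin n → ℝ) (hgp : g ⬝ᵥ pm = 0)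
    (A W B : Matrix (Fin n) (Fin n) ℝ)
    (hA : A = 1 + (1 / (gm ⬝ᵥ gm)) • Matrix.vecMulVec pm g)
    (hW : IsUnit W) (hB : B = Aᵀ * W * A)
    (p : Fin n → ℝ) (hp : B.mulVec p = -g)
    (δ : ℝ) (hδ : δ ≠ 0) :
    ((A⁻¹)ᵀ.mulVec g = g) ∧
    (p = δ • (-(A⁻¹.mulVec g)) ↔ W.mulVec g = δ⁻¹ • g) := by
  have hA_unit : IsUnit A := hA ▸ isUnit_one_add_smul_vecMulVec hgp _
  have hgA : g ᵥ* A = g := hA ▸ vecMul_one_add_smul_vecMulVec hgp _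
  have hgA_inv : g ᵥ* A⁻¹ = g := by
    rw [hA, inv_one_add_smul_vecMulVec hgp, vecMul_one_add_smul_vecMulVec hgp]
  have hWAp : W *ᵥ (A *ᵥ p) = -g :=
    mulVec_mulVec_eq_neg_of_transpose_mul_mul_mulVec_eq_neg hA_unit hgA (hB ▸ hp)
  exact ⟨by rw [mulVec_transpose, hgA_inv], eq_smul_neg_inv_mulVec_iff hA_unit hW hWAp hδ⟩

/-- with B = Aᵀ W A, p solving Bp = −g satisfies p = δ(−A⁻¹g) iff
    W g = (1/δ) g; in particular A^{-T} g = g. -/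
theorem stmt3 {n : ℕ} (pm gm g : Fin n → ℝ) (hgm : gm ≠ 0) (hgp : g ⬝ᵥ pm = 0)
    (A W B : Matrix (Fin n) (Fin n) ℝ)
    (hA : A = 1 + (1 / (gm ⬝ᵥ gm)) • Matrix.vecMulVec pm g)
    (hW : IsUnit W) (hB : B = Aᵀ * W * A)
    (p : Fin n → ℝ) (hp : B.mulVec p = -g)
    (δ : ℝ) (hδ : δ ≠ 0) :
    ((A⁻¹)ᵀ.mulVec g = g) ∧
    (p = δ • (-(A⁻¹.mulVec g)) ↔ W.mulVec g = δ⁻¹ • g) :=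
  stmt3_general pm gm g hgp A W B hA hW hB p hp δ hδ
end

section
/- Let B₋ be nonsingular with B₋ p₋ = −g₋, B₋ g = g, gᵀp₋ = 0, g ≠ 0, g₋ᵀp₋ ≠ 0, and A = I − (1/(p₋ᵀg₋)) p₋ gᵀ. Define U = Aᵀ A − B₋ and B = B₋ + U = Aᵀ A. Then the solution p of B p = −g satisfies p = −A⁻¹ g, i.e., p equals the CG direction (δ = 1). -/
/-!
Since `gᵀp₋ = 0`, the rank-one matrix `N = p₋gᵀ/(p₋ᵀg₋)` squares to zero, so `A = I - N` is
invertible and `Aᵀg = g - (p₋ᵀg/(p₋ᵀg₋)) g = g`. Hence `AᵀAp = -g = Aᵀ(-g)` and cancelling the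
invertible `Aᵀ` gives `Ap = -g`.
-/

open Matrix

namespace Matrix

variable {m R : Type*} [Fintype m] [CommRing R]

theorem smul_vecMulVec_mul_self_eq_zero (s : R) {a b : m → R} (h : b ⬝ᵥ a = 0) :
    s • vecMulVec a b * s • vecMulVec a b = 0 := by
  rw [smul_mul_smul_comm, vecMulVec_mul_vecMulVec, h, zero_smul, vecMulVec_zero, smul_zero]

theorem isUnit_one_sub_smul_vecMulVec [DecidableEq m] (s : R) {a b : m → R} (h : b ⬝ᵥ a = 0) :
    IsUnit (1 - s • vecMulVec a b) :=
  IsNilpotent.isUnit_one_sub ⟨2, by rw [pow_two, smul_vecMulVec_mul_self_eq_zero s h]⟩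

theorem transpose_one_sub_smul_vecMulVec_mulVec_self [DecidableEq m] (s : R) {a b : m → R}
    (h : b ⬝ᵥ a = 0) : (1 - s • vecMulVec a b)ᵀ *ᵥ b = b := by
  rw [transpose_sub, transpose_one, transpose_smul, transpose_vecMulVec, sub_mulVec, one_mulVec,
    smul_mulVec, vecMulVec_mulVec, dotProduct_comm, h]
  simp

theorem eq_neg_inv_mulVec_of_transpose_mul_self_mulVec [DecidableEq m] {A : Matrix m m R}
    (hA : IsUnit A) {g p : m → R} (hAg : Aᵀ *ᵥ g = g) (hp : (Aᵀ * A) *ᵥ p = -g) :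
    p = -(A⁻¹ *ᵥ g) := by
  have hAp : A *ᵥ p = -g :=
    mulVec_injective_of_isUnit ((isUnit_transpose A).mpr hA)
      (by rw [mulVec_mulVec, hp, mulVec_neg, hAg])
  rw [← mulVec_neg, ← hAp, mulVec_mulVec, nonsing_inv_mul _ ((isUnit_iff_isUnit_det A).mp hA),
    one_mulVec]

end Matrix

theorem stmt5_general {n : ℕ} (pm gm g : Fin n → ℝ) (Bm : Matrix (Fin n) (Fin n) ℝ)
    (hgp : g ⬝ᵥ pm = 0)
    (A U B : Matrix (Fin n) (Fin n) ℝ)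
    (hA : A = 1 - (1 / (pm ⬝ᵥ gm)) • Matrix.vecMulVec pm g)
    (hU : U = Aᵀ * A - Bm) (hB : B = Bm + U)
    (p : Fin n → ℝ) (hp : B.mulVec p = -g) :
    p = -(A⁻¹.mulVec g) := by
  have hBA : B = Aᵀ * A := by rw [hB, hU, add_sub_cancel]
  subst hA
  exact eq_neg_inv_mulVec_of_transpose_mul_self_mulVec (isUnit_one_sub_smul_vecMulVec _ hgp)
    (transpose_one_sub_smul_vecMulVec_mulVec_self _ hgp) (hBA ▸ hp)

/-- with B = AᵀA, the solution p of Bp = −g equals the CG direction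
    −A⁻¹g (δ = 1). -/
theorem stmt5 {n : ℕ} (pm gm g : Fin n → ℝ) (Bm : Matrix (Fin n) (Fin n) ℝ)
    (hBm : IsUnit Bm) (hBmpm : Bm.mulVec pm = -gm) (hBmg : Bm.mulVec g = g)
    (hgp : g ⬝ᵥ pm = 0) (hg : g ≠ 0) (hgmpm : gm ⬝ᵥ pm ≠ 0)
    (A U B : Matrix (Fin n) (Fin n) ℝ)
    (hA : A = 1 - (1 / (pm ⬝ᵥ gm)) • Matrix.vecMulVec pm g)
    (hU : U = Aᵀ * A - Bm) (hB : B = Bm + U)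
    (p : Fin n → ℝ) (hp : B.mulVec p = -g) :
    p = -(A⁻¹.mulVec g) :=
  stmt5_general pm gm g Bm hgp A U B hA hU hB p hp
end

section
/- Let A = I − (1/(p₋ᵀg₋)) p₋ gᵀ with gᵀp₋ = 0, and suppose B₋ is nonsingular with B₋ p₋ = −g₋, B₋ g = g, p₋ᵀB₋p₋ ≠ 0, g ≠ 0. Let U = B − B₋ where B is nonsingular, and let p solve B p = −g. Then for any nonzero δ, p = δ(−A⁻¹g) if and only if U A⁻¹ g = (1/δ − 1) g − ((gᵀg)/(p₋ᵀB₋p₋)) g₋. -/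
open Matrix

/-- p = δ(−A⁻¹g) iff U A⁻¹ g = (1/δ − 1) g − ((gᵀg)/(p₋ᵀB₋p₋)) g₋. -/
theorem stmt7 {n : ℕ} (pm gm g : Fin n → ℝ)
    (A Bm B U : Matrix (Fin n) (Fin n) ℝ)
    (hA : A = 1 - (1 / (pm ⬝ᵥ gm)) • Matrix.vecMulVec pm g)
    (hgp : g ⬝ᵥ pm = 0)
    (hBm : IsUnit Bm) (hBmpm : Bm.mulVec pm = -gm) (hBmg : Bm.mulVec g = g)
    (hs : pm ⬝ᵥ Bm.mulVec pm ≠ 0) (hg : g ≠ 0)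
    (hB : IsUnit B) (hU : U = B - Bm)
    (p : Fin n → ℝ) (hp : B.mulVec p = -g)
    (δ : ℝ) (hδ : δ ≠ 0) :
    p = δ • (-(A⁻¹.mulVec g)) ↔
      U.mulVec (A⁻¹.mulVec g) =
        (δ⁻¹ - 1) • g - ((g ⬝ᵥ g) / (pm ⬝ᵥ Bm.mulVec pm)) • gm := by
  set s : ℝ := pm ⬝ᵥ Bm.mulVec pm with hsdef
  have hpgm : pm ⬝ᵥ gm = -s := by
    rw [hsdef, hBmpm, dotProduct_neg]; ring
  have hpgm0 : pm ⬝ᵥ gm ≠ 0 := by rw [hpgm]; exact neg_ne_zero.mpr hs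
  set c : ℝ := 1 / (pm ⬝ᵥ gm) with hcdef
  set P : Matrix (Fin n) (Fin n) ℝ := Matrix.vecMulVec pm g with hPdef
  -- P * P = 0
  have hPP : P * P = 0 := by
    ext i j
    simp only [Matrix.mul_apply, hPdef, Matrix.vecMulVec_apply, Matrix.zero_apply]
    have : ∀ k, pm i * g k * (pm k * g j) = pm i * g j * (g k * pm k) := by
      intro k; ring
    rw [Finset.sum_congr rfl (fun k _ => this k), ← Finset.mul_sum]
    have : (∑ k, g k * pm k) = g ⬝ᵥ pm := rfl
    rw [this, hgp, mul_zero]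
  -- A⁻¹ = 1 + c • P
  have hright : A * (1 + c • P) = 1 := by
    rw [hA]
    rw [Matrix.mul_add, Matrix.sub_mul, Matrix.sub_mul, Matrix.mul_one, Matrix.one_mul,
      Matrix.smul_mul, Matrix.mul_smul, Matrix.smul_mul, hPP, smul_zero, smul_zero,
      Matrix.mul_one]
    abel
  have hAinv : A⁻¹ = 1 + c • P := Matrix.inv_eq_right_inv hright
  set w : Fin n → ℝ := A⁻¹.mulVec g with hwdef
  have hPg : P.mulVec g = (g ⬝ᵥ g) • pm := by
    ext i
    simp only [hPdef, Matrix.mulVec, Matrix.vecMulVec_apply, dotProduct, Pi.smul_apply,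
      smul_eq_mul, Finset.mul_sum]
    rw [Finset.sum_mul]
    exact Finset.sum_congr rfl fun k _ => by ring
  have hw : w = g + (c * (g ⬝ᵥ g)) • pm := by
    rw [hwdef, hAinv, Matrix.add_mulVec, Matrix.one_mulVec, Matrix.smul_mulVec, hPg,
      smul_smul]
  -- Bm w = g + ((g⬝g)/s) • gm
  have hBmw : Bm.mulVec w = g + ((g ⬝ᵥ g) / s) • gm := by
    rw [hw, Matrix.mulVec_add, Matrix.mulVec_smul, hBmg, hBmpm, hcdef, hpgm]
    rw [smul_neg, ← neg_smul]
    congr 1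
    field_simp
  have hdet : IsUnit B.det := (Matrix.isUnit_iff_isUnit_det B).mp hB
  have hinj : Function.Injective B.mulVec := by
    intro x y hxy
    have h2 := congrArg (B⁻¹.mulVec) hxy
    rwa [Matrix.mulVec_mulVec, Matrix.mulVec_mulVec, Matrix.nonsing_inv_mul B hdet,
      Matrix.one_mulVec, Matrix.one_mulVec] at h2
  -- both sides equivalent to B w = δ⁻¹ • g
  have key : (p = δ • (-w)) ↔ B.mulVec w = δ⁻¹ • g := by
    constructor
    · intro h
      have h2 : B.mulVec p = B.mulVec (δ • (-w)) := congrArg _ h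
      rw [hp, Matrix.mulVec_smul, Matrix.mulVec_neg] at h2
      have h3 : δ • B.mulVec w = g := by
        have := congrArg Neg.neg h2
        rw [neg_neg, smul_neg, neg_neg] at this
        exact this.symm
      rw [← h3, smul_smul, inv_mul_cancel₀ hδ, one_smul]
    · intro h
      apply hinj
      rw [hp, Matrix.mulVec_smul, Matrix.mulVec_neg, h, smul_neg, smul_smul,
        mul_inv_cancel₀ hδ, one_smul]
  rw [key, hU, Matrix.sub_mulVec, hBmw]
  constructor
  · intro h
    rw [h]
    ext i
    simp [smul_eq_mul]
    ring
  · intro h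
    have h2 : B.mulVec w = (δ⁻¹ - 1) • g - ((g ⬝ᵥ g) / s) • gm + (g + ((g ⬝ᵥ g) / s) • gm) := by
      rw [← h]; abel
    rw [h2]
    ext i
    simp [smul_eq_mul]
    ring
end

section
/- Under the conditions gᵀp₋ = 0, B₋p₋ = −g₋, B₋g = g, g ≠ 0, g₋ ≠ 0, p₋ᵀB₋p₋ ≠ 0, set s := p₋ᵀB₋p₋ and δ̂ := 1/(1 + gᵀg/s). For any nonzero δ ≠ δ̂, the symmetric rank-one matrix U = (1/((1/δ−1) gᵀg − (gᵀg)²/s)) u uᵀ with u = (1/δ − 1) g − (gᵀg/s) g₋ satisfies U A⁻¹ g = (1/δ − 1) g − (gᵀg/s) g₋, where A⁻¹ = I + (1/(p₋ᵀg₋)) p₋ gᵀ. -/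
open Matrix

lemma vecMulVec_mulVec' {n : ℕ} (w v x : Fin n → ℝ) :
    (Matrix.vecMulVec w v).mulVec x = (v ⬝ᵥ x) • w := by
  ext i
  simp [Matrix.mulVec, Matrix.vecMulVec_apply, dotProduct, Finset.mul_sum, Finset.sum_mul,
    mul_comm, mul_assoc, mul_left_comm]

/-- the symmetric rank-one matrix U = (1/((1/δ−1)gᵀg − (gᵀg)²/s)) u uᵀ
    with u = (1/δ−1)g − (gᵀg/s)g₋ satisfies U A⁻¹ g = (1/δ−1)g − (gᵀg/s)g₋. -/
theorem stmt8 {n : ℕ} (pm gm g : Fin n → ℝ) (Bm : Matrix (Fin n) (Fin n) ℝ)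
    (hgp : g ⬝ᵥ pm = 0) (hgmg : gm ⬝ᵥ g = 0)
    (hBmpm : Bm.mulVec pm = -gm) (hBmg : Bm.mulVec g = g)
    (hg : g ≠ 0) (hgm : gm ≠ 0)
    (s : ℝ) (hs : s = pm ⬝ᵥ Bm.mulVec pm) (hs0 : s ≠ 0)
    (δhat : ℝ) (hδhat : δhat = 1 / (1 + (g ⬝ᵥ g) / s))
    (δ : ℝ) (hδ : δ ≠ 0) (hδne : δ ≠ δhat)
    (u : Fin n → ℝ) (hu : u = (1 / δ - 1) • g - ((g ⬝ᵥ g) / s) • gm)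
    (U Ainv : Matrix (Fin n) (Fin n) ℝ)
    (hU : U = (1 / ((1 / δ - 1) * (g ⬝ᵥ g) - (g ⬝ᵥ g) ^ 2 / s)) • Matrix.vecMulVec u u)
    (hAinv : Ainv = 1 + (1 / (pm ⬝ᵥ gm)) • Matrix.vecMulVec pm g) :
    U.mulVec (Ainv.mulVec g) = (1 / δ - 1) • g - ((g ⬝ᵥ g) / s) • gm := by
  set t : ℝ := g ⬝ᵥ g with ht
  have ht0 : t ≠ 0 := by
    simpa [ht, dotProduct_self_eq_zero] using hg
  -- pm ⬝ᵥ gm = -s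
  have hpmgm : pm ⬝ᵥ gm = -s := by
    rw [hs, hBmpm]; simp
  have hpg : pm ⬝ᵥ g = 0 := by rwa [dotProduct_comm] at hgp
  -- Ainv g
  have hAg : Ainv.mulVec g = g + (t / (pm ⬝ᵥ gm)) • pm := by
    rw [hAinv, add_mulVec, one_mulVec, smul_mulVec, vecMulVec_mulVec', smul_smul]
    congr 1
    rw [ht]; ring
  -- u ⬝ᵥ (Ainv g)
  have hupm : u ⬝ᵥ pm = t := by
    rw [hu]
    have hgmpm : gm ⬝ᵥ pm = -s := by rwa [dotProduct_comm] at hpmgm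
    simp [sub_dotProduct, smul_dotProduct, hgp, hgmpm]
    field_simp
  have hug : u ⬝ᵥ g = (1 / δ - 1) * t := by
    rw [hu]
    simp [sub_dotProduct, smul_dotProduct, hgmg, ht]
  have hdot : u ⬝ᵥ Ainv.mulVec g = (1 / δ - 1) * t - t ^ 2 / s := by
    rw [hAg, dotProduct_add, dotProduct_smul, hupm, hug, hpmgm, smul_eq_mul]
    rw [div_neg]
    ring
  -- denominator nonzero
  have hden : (1 / δ - 1) * t - t ^ 2 / s ≠ 0 := by
    intro h
    have h1 : 1 / δ - 1 - t / s = 0 := by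
      have : ((1 / δ - 1) - t / s) * t = 0 := by
        field_simp at h ⊢
        linarith [h]
      rcases mul_eq_zero.1 this with h' | h'
      · exact h'
      · exact absurd h' ht0
    -- so 1/δ = 1 + t/s
    have h2 : (1 : ℝ) / δ = 1 + t / s := by linarith
    have hne : 1 + t / s ≠ 0 := by
      rw [← h2]; exact one_div_ne_zero hδ
    apply hδne
    rw [hδhat, ← h2, one_div_one_div]
  rw [hU, smul_mulVec, vecMulVec_mulVec', hdot, smul_smul, one_div,
    inv_mul_cancel₀ hden, one_smul, hu]
end
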